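/- Consequently, with the notation of the preceding statement, the matrices 2I + M⁻¹ + M − (I ± DC⁻¹)(I+M)(I ± DC⁻¹)ᵀ are positive semidefinite (both signs) if and only if (γ²I−P)(T−P)⁻¹(γ²I−P) ⪰ (I ± BKA⁻¹)(γ²I−P)(I ± BKA⁻¹)ᵀ for both signs. -/

import Mathlib

/-! With `S = (γ²I − T)^{1/2}` and `G = γ²I − P = S² + (T − P)` one computes
`DC⁻¹ = S⁻¹(BKA⁻¹)S`, `I + M = S⁻¹GS⁻¹` and `2I + M⁻¹ + M = S⁻¹G(T − P)⁻¹GS⁻¹`, so for each sign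
the first matrix is `S⁻¹ X S⁻¹` for the corresponding matrix `X` of the second family.
Congruence by the invertible symmetric `S⁻¹` preserves positive semidefiniteness. -/

open Matrix

open scoped ComplexOrder in
/-- `Matrix.PosSemidef.sqrt` as defined in Mathlib of December 2024 (removed since). -/
noncomputable def Matrix.PosSemidef.sqrt {n : Type*} [Fintype n] [DecidableEq n] {𝕜 : Type*} [RCLike 𝕜]
    {A : Matrix n n 𝕜} (hA : A.PosSemidef) : Matrix n n 𝕜 :=
  (hA.1.eigenvectorUnitary : Matrix n n 𝕜) * diagonal ((↑) ∘ (√·) ∘ hA.1.eigenvalues) *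
    (star (hA.1.eigenvectorUnitary : Matrix n n 𝕜))

namespace Matrix.PosSemidef

open scoped ComplexOrder

variable {n 𝕜 : Type*} [Fintype n] [DecidableEq n] [RCLike 𝕜] {A : Matrix n n 𝕜}

theorem sqrt_mul_self (hA : A.PosSemidef) : hA.sqrt * hA.sqrt = A := by
  set U : Matrix n n 𝕜 := (hA.1.eigenvectorUnitary : Matrix n n 𝕜)
  have hU : star U * U = 1 := Unitary.coe_star_mul_self _
  conv_rhs => rw [hA.1.spectral_theorem]
  calc hA.sqrt * hA.sqrt
      = U * (diagonal ((↑) ∘ (√·) ∘ hA.1.eigenvalues) * (star U * U) *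
          diagonal ((↑) ∘ (√·) ∘ hA.1.eigenvalues)) * star U := by
        simp only [PosSemidef.sqrt, U, Matrix.mul_assoc]
    _ = _ := by
      rw [hU, Matrix.mul_one, diagonal_mul_diagonal, Unitary.conjStarAlgAut_apply]
      congr 3
      funext i
      simp [← RCLike.ofReal_mul, Real.mul_self_sqrt (hA.eigenvalues_nonneg i)]

theorem isHermitian_sqrt (hA : A.PosSemidef) : hA.sqrt.IsHermitian := by
  rw [PosSemidef.sqrt, star_eq_conjTranspose]
  refine isHermitian_mul_mul_conjTranspose _ (isHermitian_diagonal_of_self_adjoint _ ?_)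
  ext i
  simp

end Matrix.PosSemidef

namespace Matrix

variable {n R : Type*} [Fintype n] [DecidableEq n] [CommRing R] {S : Matrix n n R}

theorem one_add_inv_mul_mul_inv (hS : IsUnit S.det) (Q : Matrix n n R) :
    1 + S⁻¹ * Q * S⁻¹ = S⁻¹ * (S * S + Q) * S⁻¹ := by
  rw [Matrix.mul_add, Matrix.add_mul, ← Matrix.mul_assoc, nonsing_inv_mul _ hS, Matrix.one_mul,
    mul_nonsing_inv _ hS]

theorem two_smul_one_add_inv_add_inv_mul_mul_inv (hS : IsUnit S.det) {Q : Matrix n n R}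
    (hQ : IsUnit Q.det) :
    (2 : R) • (1 : Matrix n n R) + (S⁻¹ * Q * S⁻¹)⁻¹ + S⁻¹ * Q * S⁻¹ =
      S⁻¹ * ((S * S + Q) * Q⁻¹ * (S * S + Q)) * S⁻¹ := by
  have hSl := nonsing_inv_mul _ hS
  have hSr := mul_nonsing_inv _ hS
  have hQl := nonsing_inv_mul _ hQ
  have hQr := mul_nonsing_inv _ hQ
  rw [Matrix.mul_inv_rev, Matrix.mul_inv_rev, nonsing_inv_nonsing_inv _ hS]
  calc (2 : R) • (1 : Matrix n n R) + S * (Q⁻¹ * S) + S⁻¹ * Q * S⁻¹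
      = S⁻¹ * S * (S * Q⁻¹ * S) * (S * S⁻¹) + S⁻¹ * S * (S * (Q⁻¹ * Q) * S⁻¹)
          + S⁻¹ * (Q * Q⁻¹ * S) * (S * S⁻¹) + S⁻¹ * (Q * Q⁻¹) * Q * S⁻¹ := by
        simp only [hSl, hSr, hQl, hQr, Matrix.mul_one, Matrix.one_mul, two_smul]
        noncomm_ring
    _ = _ := by noncomm_ring

theorem one_add_smul_inv_mul_mul (hS : IsUnit S.det) (ε : R) (Z : Matrix n n R) :
    1 + ε • (S⁻¹ * Z * S) = S⁻¹ * (1 + ε • Z) * S := by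
  rw [Matrix.mul_add, Matrix.add_mul, Matrix.mul_one, nonsing_inv_mul _ hS, Matrix.mul_smul,
    Matrix.smul_mul]

theorem inv_mul_mul_mul_inv_mul_mul_transpose (hS : IsUnit S.det) (hSsymm : S.IsSymm)
    (W G : Matrix n n R) :
    S⁻¹ * W * S * (S⁻¹ * G * S⁻¹) * (S⁻¹ * W * S)ᵀ = S⁻¹ * (W * G * Wᵀ) * S⁻¹ := by
  rw [transpose_mul, transpose_mul, transpose_nonsing_inv, hSsymm.eq]
  calc _ = S⁻¹ * W * (S * S⁻¹) * G * (S⁻¹ * S) * Wᵀ * S⁻¹ := by noncomm_ring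
    _ = _ := by rw [mul_nonsing_inv _ hS, nonsing_inv_mul _ hS]; noncomm_ring

theorem posSemidef_inv_mul_mul_inv_iff [PartialOrder R] [StarRing R] (hS : IsUnit S.det)
    (hSh : S.IsHermitian) {X : Matrix n n R} :
    (S⁻¹ * X * S⁻¹).PosSemidef ↔ X.PosSemidef := by
  have hSinv : IsUnit S⁻¹ := (isUnit_iff_isUnit_det _).mpr (isUnit_nonsing_inv_det _ hS)
  simpa only [star_eq_conjTranspose, hSh.inv.eq] using
    hSinv.posSemidef_star_right_conjugate_iff (x := X)

end Matrix

theorem stmt14_general {n m : ℕ} (γ : ℝ)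
    (T P A : Matrix (Fin n) (Fin n) ℝ)
    (B : Matrix (Fin n) (Fin m) ℝ) (K : Matrix (Fin m) (Fin n) ℝ)
    (hTP : (T - P).PosDef)
    (hγT : (γ ^ 2 • (1 : Matrix (Fin n) (Fin n) ℝ) - T).PosDef)
    (C D M : Matrix (Fin n) (Fin n) ℝ)
    (hC : C = (hγT.posSemidef.sqrt)⁻¹ * A)
    (hD : D = (hγT.posSemidef.sqrt)⁻¹ * (B * K))
    (hM : M = (hγT.posSemidef.sqrt)⁻¹ * (T - P) * (hγT.posSemidef.sqrt)⁻¹) :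
    (∀ ε : ℝ, ε = 1 ∨ ε = -1 →
      ((2 : ℝ) • (1 : Matrix (Fin n) (Fin n) ℝ) + M⁻¹ + M
        - (1 + ε • (D * C⁻¹)) * (1 + M) * (1 + ε • (D * C⁻¹))ᵀ).PosSemidef) ↔
    (∀ ε : ℝ, ε = 1 ∨ ε = -1 →
      ((γ ^ 2 • (1 : Matrix (Fin n) (Fin n) ℝ) - P) * (T - P)⁻¹ *
          (γ ^ 2 • (1 : Matrix (Fin n) (Fin n) ℝ) - P)
        - (1 + ε • (B * K * A⁻¹)) * (γ ^ 2 • (1 : Matrix (Fin n) (Fin n) ℝ) - P) *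
            (1 + ε • (B * K * A⁻¹))ᵀ).PosSemidef) := by
  set S := hγT.posSemidef.sqrt
  have hSh : S.IsHermitian := hγT.posSemidef.isHermitian_sqrt
  have hS : IsUnit S.det := by
    refine isUnit_of_mul_isUnit_left (y := S.det) ?_
    rw [← det_mul, hγT.posSemidef.sqrt_mul_self]
    exact hγT.det_pos.ne'.isUnit
  have hQ : IsUnit (T - P).det := hTP.det_pos.ne'.isUnit
  have hG : S * S + (T - P) = γ ^ 2 • 1 - P := by
    rw [hγT.posSemidef.sqrt_mul_self]
    abel
  have hDC : D * C⁻¹ = S⁻¹ * (B * K * A⁻¹) * S := by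
    rw [hD, hC, Matrix.mul_inv_rev, nonsing_inv_nonsing_inv _ hS]
    simp only [Matrix.mul_assoc]
  have hcongr : ∀ ε : ℝ,
      (2 : ℝ) • (1 : Matrix (Fin n) (Fin n) ℝ) + M⁻¹ + M
        - (1 + ε • (D * C⁻¹)) * (1 + M) * (1 + ε • (D * C⁻¹))ᵀ =
      S⁻¹ * ((γ ^ 2 • 1 - P) * (T - P)⁻¹ * (γ ^ 2 • 1 - P)
        - (1 + ε • (B * K * A⁻¹)) * (γ ^ 2 • 1 - P) * (1 + ε • (B * K * A⁻¹))ᵀ) * S⁻¹ := by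
    intro ε
    rw [hM, hDC, two_smul_one_add_inv_add_inv_mul_mul_inv hS hQ, one_add_inv_mul_mul_inv hS,
      one_add_smul_inv_mul_mul hS,
      inv_mul_mul_mul_inv_mul_mul_transpose hS (isHermitian_iff_isSymm.mp hSh), hG,
      ← Matrix.sub_mul, ← Matrix.mul_sub]
  simp only [hcongr, posSemidef_inv_mul_mul_inv_iff hS hSh]

/-- Under the congruence of the preceding identity, positive semidefiniteness of
`2I+M⁻¹+M−(I±DC⁻¹)(I+M)(I±DC⁻¹)ᵀ` (both signs) is equivalent to
`(γ²I−P)(T−P)⁻¹(γ²I−P) ⪰ (I±BKA⁻¹)(γ²I−P)(I±BKA⁻¹)ᵀ` (both signs). -/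
theorem stmt14 {n m : ℕ} (γ : ℝ) (hγ : 0 < γ)
    (T P A : Matrix (Fin n) (Fin n) ℝ) (hTs : T.IsSymm) (hPs : P.IsSymm)
    (hA : IsUnit A.det)
    (B : Matrix (Fin n) (Fin m) ℝ) (K : Matrix (Fin m) (Fin n) ℝ)
    (hTP : (T - P).PosDef)
    (hγT : (γ ^ 2 • (1 : Matrix (Fin n) (Fin n) ℝ) - T).PosDef)
    (C D M : Matrix (Fin n) (Fin n) ℝ)
    (hC : C = (hγT.posSemidef.sqrt)⁻¹ * A)
    (hD : D = (hγT.posSemidef.sqrt)⁻¹ * (B * K))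
    (hM : M = (hγT.posSemidef.sqrt)⁻¹ * (T - P) * (hγT.posSemidef.sqrt)⁻¹) :
    (∀ ε : ℝ, ε = 1 ∨ ε = -1 →
      ((2 : ℝ) • (1 : Matrix (Fin n) (Fin n) ℝ) + M⁻¹ + M
        - (1 + ε • (D * C⁻¹)) * (1 + M) * (1 + ε • (D * C⁻¹))ᵀ).PosSemidef) ↔
    (∀ ε : ℝ, ε = 1 ∨ ε = -1 →
      ((γ ^ 2 • (1 : Matrix (Fin n) (Fin n) ℝ) - P) * (T - P)⁻¹ *
          (γ ^ 2 • (1 : Matrix (Fin n) (Fin n) ℝ) - P)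
        - (1 + ε • (B * K * A⁻¹)) * (γ ^ 2 • (1 : Matrix (Fin n) (Fin n) ℝ) - P) *
            (1 + ε • (B * K * A⁻¹))ᵀ).PosSemidef) :=
  stmt14_general γ T P A B K hTP hγT C D M hC hD hM
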